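/- For every m ≥ 0, the following identity of formal power series in z over ℚ(q) holds: ∑_{n=m}^{∞} {n brace m}_q · z^n / [n]!_q = (1 / ([m]!_q · q^{C(m,2)})) · ∑_{i=0}^{m} qbinom(m, i) · (−1)^i · q^{C(i,2)} · E_q( [m−i]_q · z ), where E_q(z) := ∑_{k=0}^{∞} z^k / [k]!_q is the q-exponential series. -/

import Mathlib

open Finset

/-- The q-integer `[n]_q = 1 + q + ⋯ + q^(n-1)`. -/
def qInt {R : Type*} [CommSemiring R] (q : R) (n : ℕ) : R :=
  ∑ i ∈ Finset.range n, q ^ i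

/-- The q-factorial `[n]!_q = [1]_q [2]_q ⋯ [n]_q`. -/
def qFact {R : Type*} [CommSemiring R] (q : R) (n : ℕ) : R :=
  ∏ i ∈ Finset.range n, qInt q (i + 1)

/-- The Carlitz q-Stirling numbers of the second kind. -/
def qStirling {R : Type*} [CommSemiring R] (q : R) : ℕ → ℕ → R
  | 0, 0 => 1
  | 0, _ + 1 => 0
  | _ + 1, 0 => 0
  | n + 1, m + 1 => qStirling q n m + qInt q (m + 1) * qStirling q n (m + 1)

section
variable {R : Type*} [CommSemiring R] (q : R)

lemma qInt_add (a b : ℕ) : qInt q (a + b) = qInt q a + q ^ a * qInt q b := by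
  simp [qInt, Finset.sum_range_add, pow_add, Finset.mul_sum]

lemma qFact_zero : qFact q 0 = 1 := rfl

lemma qFact_succ (n : ℕ) : qFact q (n + 1) = qFact q n * qInt q (n + 1) :=
  Finset.prod_range_succ _ _

lemma map_qInt {S : Type*} [CommSemiring S] (f : R →+* S) (n : ℕ) :
    f (qInt q n) = qInt (f q) n := by
  simp [qInt, map_sum]

end

/-- Recursive q-binomial coefficient. -/
def qb {R : Type*} [CommSemiring R] (q : R) : ℕ → ℕ → R
  | _, 0 => 1
  | 0, _ + 1 => 0
  | n + 1, k + 1 => q ^ (k + 1) * qb q n (k + 1) + qb q n k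

section
variable {R : Type*} [CommSemiring R] (q : R)

lemma qb_zero_right (n : ℕ) : qb q n 0 = 1 := by cases n <;> rfl

lemma qb_eq_zero : ∀ {n k : ℕ}, n < k → qb q n k = 0
  | 0, k + 1, _ => rfl
  | n + 1, k + 1, h => by
    rw [qb, qb_eq_zero (by omega), qb_eq_zero (by omega)]
    ring

lemma qb_mul_fact : ∀ {n k : ℕ}, k ≤ n →
    qb q n k * (qFact q k * qFact q (n - k)) = qFact q n
  | n, 0, _ => by simp [qb_zero_right, qFact]
  | 0, k + 1, h => by omega
  | n + 1, k + 1, h => by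
    rcases Nat.lt_or_ge k n with hk | hk
    · -- k + 1 ≤ n
      have h1 : qb q n (k+1) * (qFact q (k+1) * qFact q (n - (k+1))) = qFact q n :=
        qb_mul_fact (by omega)
      have h2 : qb q n k * (qFact q k * qFact q (n - k)) = qFact q n :=
        qb_mul_fact (by omega)
      have e1 : n + 1 - (k + 1) = (n - (k+1)) + 1 := by omega
      have e2 : n - k = (n - (k+1)) + 1 := by omega
      have key : qInt q (n + 1) = q ^ (k + 1) * qInt q (n - k) + qInt q (k + 1) := by
        have : n + 1 = (k + 1) + (n - k) := by omega
        rw [this, qInt_add]; ring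
      rw [qb, qFact_succ q n, key, e1, ← e2]
      calc (q ^ (k + 1) * qb q n (k + 1) + qb q n k) *
            (qFact q (k + 1) * qFact q (n - k))
          = q ^ (k+1) * qInt q (n-k) *
              (qb q n (k+1) * (qFact q (k+1) * qFact q (n - (k+1))))
            + qInt q (k+1) * (qb q n k * (qFact q k * qFact q (n - k))) := by
            rw [e2, qFact_succ q (n - (k+1)), qFact_succ q k, ← e2]
            ring
        _ = qFact q n * (q ^ (k + 1) * qInt q (n - k) + qInt q (k + 1)) := by
            rw [h1, h2]; ring
    · -- k = n
      have hkn : k = n := by omega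
      subst hkn
      have h2 : qb q k k * (qFact q k * qFact q (k - k)) = qFact q k :=
        qb_mul_fact le_rfl
      rw [Nat.sub_self, qFact_zero, mul_one] at h2
      rw [qb, qb_eq_zero q (by omega), Nat.sub_self, qFact_zero, mul_one, qFact_succ]
      calc (q ^ (k+1) * 0 + qb q k k) * (qFact q k * qInt q (k+1))
          = qb q k k * qFact q k * qInt q (k+1) := by ring
        _ = qFact q k * qInt q (k+1) := by rw [h2]

lemma qStirling_eq_zero : ∀ {n m : ℕ}, n < m → qStirling q n m = 0
  | 0, _ + 1, _ => rfl
  | n + 1, m + 1, h => by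
    rw [qStirling, qStirling_eq_zero (by omega), qStirling_eq_zero (by omega)]
    ring

end

lemma qb_alt_sum {R : Type*} [CommRing R] (q : R) :
    ∀ m : ℕ, ∑ i ∈ Finset.range (m + 1), (-1 : R) ^ i * q ^ i.choose 2 * qb q m i
      = if m = 0 then 1 else 0
  | 0 => by simp [qb_zero_right]
  | m + 1 => by
    have key : ∀ j : ℕ, (-1:R)^(j+1) * q^((j+1).choose 2) * qb q (m+1) (j+1)
        = ((-1:R)^(j+1) * q^((j+1).choose 2 + (j+1)) * qb q m (j+1))
          - ((-1:R)^j * q^(j.choose 2 + j) * qb q m j) := by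
      intro j
      have hc : (j+1).choose 2 = j.choose 2 + j := by
        rw [Nat.choose_succ_succ, Nat.choose_one_right]; exact Nat.add_comm _ _
      rw [qb, hc]; ring
    rw [Finset.sum_range_succ']
    simp only [key]
    rw [Finset.sum_range_sub (fun k => (-1:R)^k * q^(k.choose 2 + k) * qb q m k)]
    rw [qb_eq_zero q (by omega : m < m + 1)]
    simp [qb_zero_right]

section
variable {F : Type*} [Field F]

lemma qFact_ne_zero (q : F) (hq : ∀ k : ℕ, k ≠ 0 → qInt q k ≠ 0) (n : ℕ) :
    qFact q n ≠ 0 :=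
  Finset.prod_ne_zero_iff.mpr fun i _ => hq (i + 1) (Nat.succ_ne_zero i)

lemma qb_mul_qInt (q : F) (hq : ∀ k : ℕ, k ≠ 0 → qInt q k ≠ 0)
    {j M : ℕ} (h : j ≤ M) :
    qb q (M + 1) (j + 1) * qInt q (j + 1) = qInt q (M + 1) * qb q M j := by
  have h1 := qb_mul_fact q (show j + 1 ≤ M + 1 by omega)
  have h2 := qb_mul_fact q h
  rw [show M + 1 - (j + 1) = M - j from by omega] at h1
  have hc : qFact q j * qFact q (M - j) ≠ 0 :=
    mul_ne_zero (qFact_ne_zero q hq j) (qFact_ne_zero q hq (M - j))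
  apply mul_right_cancel₀ hc
  calc qb q (M+1) (j+1) * qInt q (j+1) * (qFact q j * qFact q (M-j))
      = qb q (M+1) (j+1) * (qFact q (j+1) * qFact q (M-j)) := by
        rw [qFact_succ]; ring
    _ = qFact q (M+1) := h1
    _ = qInt q (M+1) * (qb q M j * (qFact q j * qFact q (M-j))) := by
        rw [h2, qFact_succ]; ring
    _ = qInt q (M+1) * qb q M j * (qFact q j * qFact q (M-j)) := by ring

lemma qStirling_key (q : F) (hq : ∀ k : ℕ, k ≠ 0 → qInt q k ≠ 0) :
    ∀ n m : ℕ,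
    ∑ i ∈ Finset.range (m + 1),
        (-1:F)^i * q^(i.choose 2) * qb q m i * (qInt q (m - i))^n
      = qFact q m * q^(m.choose 2) * qStirling q n m
  | 0, m => by
    simp only [pow_zero, mul_one]
    rw [qb_alt_sum]
    cases m with
    | zero => simp [qStirling, qFact_zero]
    | succ M => simp [qStirling]
  | n + 1, 0 => by
    simp [qb_zero_right, qInt, qStirling]
  | n + 1, M + 1 => by
    have split : ∀ i ∈ Finset.range (M + 1 + 1),
        (-1:F)^i * q^(i.choose 2) * qb q (M+1) i * (qInt q (M+1-i))^(n+1)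
        = qInt q (M+1) * ((-1:F)^i * q^(i.choose 2) * qb q (M+1) i * (qInt q (M+1-i))^n)
          - q^(M+1-i) * ((-1:F)^i * q^(i.choose 2) * qb q (M+1) i * qInt q i * (qInt q (M+1-i))^n) := by
      intro i hi
      have hi' : i ≤ M + 1 := by
        have := Finset.mem_range.mp hi; omega
      have hP : qInt q (M+1) = qInt q (M+1-i) + q^(M+1-i) * qInt q i := by
        conv_lhs => rw [show M + 1 = (M+1-i) + i from by omega]
        rw [qInt_add]
      rw [pow_succ, hP]
      ring
    rw [Finset.sum_congr rfl split, Finset.sum_sub_distrib, ← Finset.mul_sum,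
      qStirling_key q hq n (M+1)]
    have hS2 : ∑ i ∈ Finset.range (M + 1 + 1),
        q^(M+1-i) * ((-1:F)^i * q^(i.choose 2) * qb q (M+1) i * qInt q i * (qInt q (M+1-i))^n)
        = -(qInt q (M+1) * q^M * (qFact q M * q^(M.choose 2) * qStirling q n M)) := by
      rw [Finset.sum_range_succ']
      have h0 : q^(M+1-0) * ((-1:F)^0 * q^(Nat.choose 0 2) * qb q (M+1) 0 * qInt q 0 * (qInt q (M+1-0))^n) = 0 := by
        simp [qInt]
      rw [h0, add_zero]
      have term : ∀ j ∈ Finset.range (M + 1),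
          q^(M+1-(j+1)) * ((-1:F)^(j+1) * q^((j+1).choose 2) * qb q (M+1) (j+1) * qInt q (j+1) * (qInt q (M+1-(j+1)))^n)
          = (-(qInt q (M+1) * q^M)) * ((-1:F)^j * q^(j.choose 2) * qb q M j * (qInt q (M-j))^n) := by
        intro j hj
        have hj' : j ≤ M := by
          have := Finset.mem_range.mp hj; omega
        have hc : (j+1).choose 2 = j.choose 2 + j := by
          rw [Nat.choose_succ_succ, Nat.choose_one_right]; exact Nat.add_comm _ _
        have hmul := qb_mul_qInt q hq hj'
        rw [show M + 1 - (j+1) = M - j from by omega, hc,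
          show q^M = q^(M-j) * q^j from by rw [← pow_add]; congr 1; omega]
        linear_combination (q^(M-j) * (-1:F)^(j+1) * q^(j.choose 2 + j) * (qInt q (M-j))^n) * hmul
      rw [Finset.sum_congr rfl term, ← Finset.mul_sum, qStirling_key q hq n M]
      ring
    rw [hS2]
    rw [show qStirling q (n+1) (M+1) = qStirling q n M + qInt q (M+1) * qStirling q n (M+1) from rfl,
      qFact_succ, show (M+1).choose 2 = M.choose 2 + M from by
        rw [Nat.choose_succ_succ, Nat.choose_one_right]; exact Nat.add_comm _ _,
      pow_add]
    ring

end

lemma qInt_X_ne_zero : ∀ k : ℕ, k ≠ 0 → qInt (RatFunc.X : RatFunc ℚ) k ≠ 0 := by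
  intro k hk h
  rw [← RatFunc.algebraMap_X, ← map_qInt] at h
  have h2 : qInt (Polynomial.X : Polynomial ℚ) k = 0 :=
    (map_eq_zero_iff _ (RatFunc.algebraMap_injective ℚ)).mp h
  have h3 := congrArg (Polynomial.eval (1 : ℚ)) h2
  simp [qInt, Polynomial.eval_finset_sum] at h3
  exact hk h3

/-- The q-exponential series evaluated at `c·z`:
`E_q(cz) = ∑_{j=0}^∞ c^j z^j / [j]!_q`, a formal power series in `z`. -/
noncomputable def qExpAt (c : RatFunc ℚ) : PowerSeries (RatFunc ℚ) :=
  PowerSeries.mk fun j => c ^ j / qFact (RatFunc.X : RatFunc ℚ) j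

/-- Ernst's generating function for the Carlitz q-Stirling numbers:
`∑_{n=m}^∞ {n brace m}_q z^n/[n]!_q
  = (1/([m]!_q q^C(m,2))) ∑_{i=0}^m qbinom(m,i) (-1)^i q^C(i,2) E_q([m-i]_q z)`. -/
theorem qStirling_genFun (m : ℕ) :
    (PowerSeries.mk fun n =>
        if m ≤ n then
          qStirling (RatFunc.X : RatFunc ℚ) n m / qFact (RatFunc.X : RatFunc ℚ) n
        else 0)
      = PowerSeries.C
          ((qFact (RatFunc.X : RatFunc ℚ) m * (RatFunc.X : RatFunc ℚ) ^ m.choose 2)⁻¹) *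
        ∑ i ∈ Finset.range (m + 1),
          PowerSeries.C
            (qFact (RatFunc.X : RatFunc ℚ) m /
                (qFact (RatFunc.X : RatFunc ℚ) i * qFact (RatFunc.X : RatFunc ℚ) (m - i)) *
              (-1 : RatFunc ℚ) ^ i * (RatFunc.X : RatFunc ℚ) ^ i.choose 2) *
          qExpAt (qInt (RatFunc.X : RatFunc ℚ) (m - i)) := by
  have hq := qInt_X_ne_zero
  set q : RatFunc ℚ := RatFunc.X with hqdef
  apply PowerSeries.ext
  intro n
  rw [PowerSeries.coeff_mk, PowerSeries.coeff_C_mul, map_sum]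
  have hcoeff : ∀ i : ℕ,
      (PowerSeries.coeff n)
        (PowerSeries.C
            (qFact q m / (qFact q i * qFact q (m - i)) * (-1 : RatFunc ℚ) ^ i *
              q ^ i.choose 2) *
          qExpAt (qInt q (m - i)))
        = ((-1 : RatFunc ℚ) ^ i * q ^ i.choose 2 *
            (qFact q m / (qFact q i * qFact q (m - i))) * (qInt q (m - i)) ^ n) *
            (qFact q n)⁻¹ := by
    intro i
    rw [PowerSeries.coeff_C_mul, qExpAt, PowerSeries.coeff_mk]
    ring
  rw [Finset.sum_congr rfl fun i _ => hcoeff i]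
  have hB : ∀ i ∈ Finset.range (m + 1),
      ((-1 : RatFunc ℚ) ^ i * q ^ i.choose 2 *
          (qFact q m / (qFact q i * qFact q (m - i))) * (qInt q (m - i)) ^ n) *
          (qFact q n)⁻¹
        = ((-1 : RatFunc ℚ) ^ i * q ^ i.choose 2 * qb q m i * (qInt q (m - i)) ^ n) *
            (qFact q n)⁻¹ := by
    intro i hi
    have hi' : i ≤ m := by have := Finset.mem_range.mp hi; omega
    have hc : qFact q i * qFact q (m - i) ≠ 0 :=
      mul_ne_zero (qFact_ne_zero q hq i) (qFact_ne_zero q hq (m - i))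
    rw [show qFact q m / (qFact q i * qFact q (m - i)) = qb q m i from
      ((eq_div_iff hc).mpr (qb_mul_fact q hi')).symm]
  rw [Finset.sum_congr rfl hB, ← Finset.sum_mul, qStirling_key q hq n m]
  have hFm : qFact q m ≠ 0 := qFact_ne_zero q hq m
  have hFn : qFact q n ≠ 0 := qFact_ne_zero q hq n
  have hX : q ^ m.choose 2 ≠ 0 := pow_ne_zero _ RatFunc.X_ne_zero
  split_ifs with h
  · field_simp
  · rw [qStirling_eq_zero q (by omega)]
    simp
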